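/- arXiv:1206.4377 — 11 statements merged into one kernel-verified Lean document; each statement's English description precedes it below -/
import Mathlib

section
/- For any set X of q binary strings of length b, the number of unordered pairs {u,v} ⊆ X with Hamming distance exactly 1 is at most (q/2)·log₂(q). -/
/-!
Split the strings according to their first bit into two classes, of sizes `a` and `b`.
An adjacent pair either lies within one class, or it consists of two strings differing only
in the first bit, so it comes from a common tail of the two classes; there are at most
`min a b` such tails. Counting ordered pairs, by induction on the length it suffices that
`a log₂ a + b log₂ b + 2 min a b ≤ (a + b) log₂ (a + b)`, an inequality that comes down to
`t ≤ log₂ (1 + t)` on `[0, 1]`.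
-/

open Finset Real

theorem le_logb_two_one_add {t : ℝ} (ht₀ : 0 ≤ t) (ht₁ : t ≤ 1) : t ≤ logb 2 (1 + t) := by
  rw [le_logb_iff_rpow_le one_lt_two (by linarith)]
  simpa [one_add_one_eq_two] using rpow_one_add_le_one_add_mul_self (s := 1) (by norm_num) ht₀ ht₁

theorem mul_logb_add_mul_logb_add_two_mul_le {a b : ℝ} (ha : 0 ≤ a) (hab : a ≤ b) :
    a * logb 2 a + b * logb 2 b + 2 * a ≤ (a + b) * logb 2 (a + b) := by
  rcases ha.eq_or_lt with rfl | ha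
  · simp
  have hb : 0 < b := ha.trans_le hab
  have h_small : a * logb 2 a + a ≤ a * logb 2 (a + b) :=
    calc a * logb 2 a + a = a * logb 2 (2 * a) := by
          rw [logb_mul two_ne_zero ha.ne', logb_self_eq_one one_lt_two]; ring
      _ ≤ a * logb 2 (a + b) := by gcongr <;> linarith
  have h_large : b * logb 2 b + a ≤ b * logb 2 (a + b) :=
    calc b * logb 2 b + a = b * (logb 2 b + a / b) := by field_simp
      _ ≤ b * (logb 2 b + logb 2 (1 + a / b)) := by
          gcongr; exact le_logb_two_one_add (by positivity) ((div_le_one hb).2 hab)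
      _ = b * logb 2 (a + b) := by
          rw [← logb_mul hb.ne' (by positivity), mul_one_add, mul_div_cancel₀ _ hb.ne', add_comm]
  linarith

theorem mul_logb_add_mul_logb_add_two_mul_min_le {a b : ℝ} (ha : 0 ≤ a) (hb : 0 ≤ b) :
    a * logb 2 a + b * logb 2 b + 2 * min a b ≤ (a + b) * logb 2 (a + b) := by
  rcases le_total a b with h | h
  · simpa [min_eq_left h] using mul_logb_add_mul_logb_add_two_mul_le ha h
  · simpa [min_eq_right h, add_comm] using mul_logb_add_mul_logb_add_two_mul_le hb h

theorem hammingDist_cons {n : ℕ} {β : Type*} [DecidableEq β] (a c : β) (s t : Fin n → β) :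
    hammingDist (Fin.cons a s : Fin (n + 1) → β) (Fin.cons c t) =
      (if a = c then 0 else 1) + hammingDist s t := by
  by_cases h : a = c <;> simp [hammingDist, card_filter, Fin.sum_univ_succ, h]

section ConsSlice

variable {n : ℕ} {β : Type*} [Fintype β] [DecidableEq β]

def consSlice (X : Finset (Fin (n + 1) → β)) (a : β) : Finset (Fin n → β) :=
  univ.filter fun t => Fin.cons a t ∈ X

theorem sum_eq_sum_sum_consSlice {M : Type*} [AddCommMonoid M] (X : Finset (Fin (n + 1) → β))
    (f : (Fin (n + 1) → β) → M) :
    ∑ x ∈ X, f x = ∑ a, ∑ t ∈ consSlice X a, f (Fin.cons a t) :=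
  calc ∑ x ∈ X, f x = ∑ x, if x ∈ X then f x else 0 := by rw [sum_ite_mem, univ_inter]
    _ = ∑ p : β × (Fin n → β), if Fin.cons p.1 p.2 ∈ X then f (Fin.cons p.1 p.2) else 0 :=
      (Fintype.sum_equiv (Fin.consEquiv fun _ => β) _ _ fun _ => rfl).symm
    _ = ∑ a, ∑ t ∈ consSlice X a, f (Fin.cons a t) := by
      simp only [Fintype.sum_prod_type, consSlice, sum_filter]

theorem card_eq_sum_card_consSlice (X : Finset (Fin (n + 1) → β)) :
    #X = ∑ a, #(consSlice X a) := by
  simp only [card_eq_sum_ones]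
  exact sum_eq_sum_sum_consSlice X _

end ConsSlice

def adjacentPairs {n : ℕ} (X : Finset (Fin n → Bool)) :
    Finset ((Fin n → Bool) × (Fin n → Bool)) :=
  (X ×ˢ X).filter fun p => hammingDist p.1 p.2 = 1

theorem adjacentPairs_of_fin_zero (X : Finset (Fin 0 → Bool)) : adjacentPairs X = ∅ :=
  filter_eq_empty_iff.2 fun p _ => by simp [hammingDist]

theorem card_adjacentPairs_eq {n : ℕ} (X : Finset (Fin (n + 1) → Bool)) :
    #(adjacentPairs X) = #(adjacentPairs (consSlice X false)) +
      #(adjacentPairs (consSlice X true)) + 2 * #(consSlice X false ∩ consSlice X true) := by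
  simp only [adjacentPairs, card_filter, sum_product]
  simp only [sum_eq_sum_sum_consSlice X, hammingDist_cons, Fintype.sum_bool]
  -- strings with different first bits are adjacent iff their tails coincide
  simp only [if_true, Bool.true_eq_false, Bool.false_eq_true, if_false, zero_add,
    Nat.add_eq_left, hammingDist_eq_zero, sum_ite_eq, sum_add_distrib, sum_ite_mem,
    ← card_eq_sum_ones, inter_comm (consSlice X true)]
  ring

theorem card_adjacentPairs_le {n : ℕ} (X : Finset (Fin n → Bool)) :
    (#(adjacentPairs X) : ℝ) ≤ #X * logb 2 #X := by
  induction n with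
  | zero =>
    rw [adjacentPairs_of_fin_zero, card_empty, Nat.cast_zero]
    exact mul_nonneg (Nat.cast_nonneg _) (div_nonneg (log_natCast_nonneg _) (log_nonneg one_le_two))
  | succ n ih =>
    set X₀ := consSlice X false
    set X₁ := consSlice X true
    have hcard : (#X : ℝ) = #X₀ + #X₁ := by
      simp [X₀, X₁, card_eq_sum_card_consSlice X, add_comm]
    have hinter : (#(X₀ ∩ X₁) : ℝ) ≤ min (#X₀ : ℝ) #X₁ := by
      exact_mod_cast le_min (card_le_card inter_subset_left) (card_le_card inter_subset_right)
    rw [card_adjacentPairs_eq, hcard]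
    push_cast
    linarith [ih X₀, ih X₁,
      mul_logb_add_mul_logb_add_two_mul_min_le (#X₀).cast_nonneg (#X₁).cast_nonneg]

/-- Any set `X` of `q` binary strings of length `b` contains at most
`(q/2)·log₂ q` unordered pairs at Hamming distance exactly 1.
(Unordered pairs are counted as half the ordered pairs.) -/
theorem hamming_distance_one_output_bound (b q : ℕ)
    (X : Finset (Fin b → Bool)) (hX : X.card = q) :
    (((X ×ˢ X).filter (fun p => hammingDist p.1 p.2 = 1)).card : ℝ) / 2 ≤
      (q : ℝ) / 2 * Real.logb 2 q := by
  subst hX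
  have h := card_adjacentPairs_le X
  unfold adjacentPairs at h
  linarith
end

section
/- For all real numbers y, z with 0 < y ≤ z, we have (y/2)·log₂(y) + (z/2)·log₂(z) + y ≤ ((y+z)/2)·log₂(y+z). -/
/-!
Multiplied by `2 log 2`, the inequality reads `(y + z) * H (y / (y + z)) ≥ 2 * y * log 2`, where
`H = binEntropy` is the binary entropy in nats. Since `y / (y + z) ≤ 1/2`, this is the chord bound
`H t ≥ 2 t * H (1/2)` given by the concavity of `H` on `[0, 1]` and `H 0 = 0`.
-/

open Real

lemma two_mul_mul_log_two_le_binEntropy {t : ℝ} (ht₀ : 0 ≤ t) (ht : t ≤ 2⁻¹) :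
    2 * t * log 2 ≤ binEntropy t := by
  have h := strictConcave_binEntropy.concaveOn.2 (show (2⁻¹ : ℝ) ∈ Set.Icc 0 1 by norm_num)
    (show (0 : ℝ) ∈ Set.Icc 0 1 by norm_num) (by linarith : 0 ≤ 2 * t)
    (by linarith : 0 ≤ 1 - 2 * t) (by ring)
  simp only [smul_eq_mul, binEntropy_two_inv, binEntropy_zero, mul_zero, add_zero] at h
  rwa [show 2 * t * 2⁻¹ = t by ring] at h

lemma mul_binEntropy_div_add {y z : ℝ} (hy : 0 < y) (hz : 0 < z) :
    (y + z) * binEntropy (y / (y + z)) = (y + z) * log (y + z) - y * log y - z * log z := by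
  have hs : y + z ≠ 0 := by positivity
  have h1 : 1 - y / (y + z) = z / (y + z) := by field_simp; ring
  rw [binEntropy, h1, inv_div, inv_div, log_div hs hy.ne', log_div hs hz.ne']
  field_simp
  ring

lemma mul_log_add_mul_log_add_two_mul_mul_log_two_le {y z : ℝ} (hy : 0 < y) (hyz : y ≤ z) :
    y * log y + z * log z + 2 * y * log 2 ≤ (y + z) * log (y + z) := by
  have hz : 0 < z := hy.trans_le hyz
  have hs : 0 < y + z := by positivity
  have hratio : y / (y + z) ≤ 2⁻¹ := by rw [div_le_iff₀ hs]; linarith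
  have h := mul_le_mul_of_nonneg_left
    (two_mul_mul_log_two_le_binEntropy (by positivity) hratio) hs.le
  rw [mul_binEntropy_div_add hy hz] at h
  have hscale : (y + z) * (2 * (y / (y + z)) * log 2) = 2 * y * log 2 := by field_simp
  linarith

/-- The key analytic inequality: for `0 < y ≤ z`,
`(y/2)·log₂ y + (z/2)·log₂ z + y ≤ ((y+z)/2)·log₂ (y+z)`. -/
theorem key_log_inequality (y z : ℝ) (hy : 0 < y) (hyz : y ≤ z) :
    y / 2 * Real.logb 2 y + z / 2 * Real.logb 2 z + y ≤
      (y + z) / 2 * Real.logb 2 (y + z) := by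
  have hlog2 : 0 < log 2 := log_pos one_lt_two
  calc y / 2 * logb 2 y + z / 2 * logb 2 z + y
      = (y * log y + z * log z + 2 * y * log 2) / (2 * log 2) := by
        simp only [logb]; field_simp
    _ ≤ (y + z) * log (y + z) / (2 * log 2) := by
        gcongr; exact mul_log_add_mul_log_add_two_mul_mul_log_two_le hy hyz
    _ = (y + z) / 2 * logb 2 (y + z) := by
        simp only [logb]; field_simp
end

section
/- For the splitting scheme with parameter c dividing b: assign each b-bit string w = w₁w₂⋯w_c (each segment of length b/c) to the c reducers indexed by (i, w₁⋯w_{i-1}w_{i+1}⋯w_c) for i = 1,…,c. Then any two strings at Hamming distance 1 are assigned to a common reducer, each string is assigned to exactly c reducers, and each reducer receives exactly 2^{b/c} strings. -/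
/-- The reducer of group `i` with key `k` receives the strings agreeing with
`k` on every segment other than segment `i`.  Strings of length `b = c·m` are
modelled as `c` segments of length `m`, i.e. `Fin c → Fin m → Bool`. -/
def splitReducer (c m : ℕ) (i : Fin c) (k : Fin c → Fin m → Bool) :
    Finset (Fin c → Fin m → Bool) :=
  Finset.univ.filter (fun w => ∀ j, j ≠ i → w j = k j)

lemma mem_splitReducer {c m : ℕ} {i : Fin c} {k w : Fin c → Fin m → Bool} :
    w ∈ splitReducer c m i k ↔ ∀ j, j ≠ i → w j = k j := by
  simp [splitReducer]

/-- The splitting scheme with parameter `c` dividing `b` (segments of length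
`m = b/c`): any two strings at Hamming distance 1 share a reducer, each string
belongs to exactly `c` reducers (keys normalized to be `false` on segment `i`),
and each reducer receives exactly `2^{b/c}` strings. -/
theorem splitting_scheme (c m : ℕ) (hc : 0 < c) :
    (∀ w w' : Fin c → Fin m → Bool,
        (∑ j, hammingDist (w j) (w' j)) = 1 →
        ∃ (i : Fin c) (k : Fin c → Fin m → Bool),
          w ∈ splitReducer c m i k ∧ w' ∈ splitReducer c m i k) ∧
    (∀ w : Fin c → Fin m → Bool,
        (Finset.univ.filter
            (fun ik : Fin c × (Fin c → Fin m → Bool) =>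
              ik.2 ik.1 = (fun _ => false) ∧ w ∈ splitReducer c m ik.1 ik.2)).card
          = c) ∧
    (∀ (i : Fin c) (k : Fin c → Fin m → Bool),
        (splitReducer c m i k).card = 2 ^ m) := by
  refine ⟨?_, ?_, ?_⟩
  · intro w w' h
    -- find a coordinate where they differ
    have hne : ∃ i, w i ≠ w' i := by
      by_contra hno
      push_neg at hno
      have : (∑ j, hammingDist (w j) (w' j)) = 0 := by
        apply Finset.sum_eq_zero
        intro j _
        simp [hno j]
      omega
    obtain ⟨i, hi⟩ := hne
    have hdi : 1 ≤ hammingDist (w i) (w' i) := by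
      have := hammingDist_ne_zero.mpr hi
      omega
    have hsplit := Finset.add_sum_erase Finset.univ
      (fun j => hammingDist (w j) (w' j)) (Finset.mem_univ i)
    have hrest : (∑ j ∈ Finset.univ.erase i, hammingDist (w j) (w' j)) = 0 := by
      omega
    have hagree : ∀ j, j ≠ i → w j = w' j := by
      intro j hj
      have hz : hammingDist (w j) (w' j) = 0 := by
        have := Finset.sum_eq_zero_iff.mp hrest j (by simp [hj])
        simpa using this
      exact hammingDist_eq_zero.mp hz
    refine ⟨i, w, ?_, ?_⟩
    · exact mem_splitReducer.mpr fun j _ => rfl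
    · exact mem_splitReducer.mpr fun j hj => (hagree j hj).symm
  · intro w
    have himg : (Finset.univ.filter
            (fun ik : Fin c × (Fin c → Fin m → Bool) =>
              ik.2 ik.1 = (fun _ => false) ∧ w ∈ splitReducer c m ik.1 ik.2))
        = Finset.univ.image
            (fun i : Fin c => (i, Function.update w i (fun _ => false))) := by
      ext ⟨i, k⟩
      simp only [Finset.mem_filter, Finset.mem_univ, true_and, Finset.mem_image,
        mem_splitReducer, Prod.mk.injEq]
      constructor
      · rintro ⟨hk, hw⟩
        refine ⟨i, rfl, ?_⟩
        funext j
        by_cases hj : j = i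
        · subst hj; simp [Function.update_self, hk]
        · simp [Function.update_of_ne hj, hw j hj]
      · rintro ⟨i', hi', hk⟩
        subst hi'
        subst hk
        exact ⟨Function.update_self _ _ _,
          fun j hj => (Function.update_of_ne hj _ _).symm⟩
    rw [himg, Finset.card_image_of_injective _ (fun a b hab => (Prod.mk.injEq _ _ _ _).mp hab |>.1)]
    simp
  · intro i k
    have himg : splitReducer c m i k
        = Finset.univ.image (fun s : Fin m → Bool => Function.update k i s) := by
      ext w
      simp only [mem_splitReducer, Finset.mem_image, Finset.mem_univ, true_and]
      constructor
      · intro hw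
        refine ⟨w i, ?_⟩
        funext j
        by_cases hj : j = i
        · subst hj; simp [Function.update_self]
        · simp [Function.update_of_ne hj, (hw j hj).symm]
      · rintro ⟨s, rfl⟩
        intro j hj
        exact Function.update_of_ne hj _ _
    rw [himg, Finset.card_image_of_injective]
    · simp [Finset.card_univ]
    · intro a b hab
      have := congrFun hab i
      simpa using this
end

section
/- A set of q edges in a simple graph contains at most (√2/3)·q^{3/2} triangles, i.e., at most that many 3-element node sets all of whose three pairwise edges lie in the set. -/
/-!
A vertex `v` of degree `d` lies in at most `q` triangles (each is `v` plus an edge) and in at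
most `d² / 2` of them (each is `v` plus two neighbours), hence in at most `d · √(q / 2)`.
Summing over `v`, each triangle is counted three times and the degrees add up to `2q`, so
`3 · #triangles ≤ 2q · √(q / 2) = √2 · q^{3/2}`.
-/

open Finset

lemma le_mul_sqrt_div_two_of_le_of_le_sq_div_two {t d q : ℝ} (hd : 0 ≤ d) (htq : t ≤ q)
    (htd : t ≤ d ^ 2 / 2) : t ≤ d * √(q / 2) := by
  rcases lt_or_ge t 0 with ht | ht
  · exact ht.le.trans (by positivity)
  rw [← Real.sqrt_sq hd, ← Real.sqrt_mul (sq_nonneg d), ← Real.sqrt_sq ht]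
  exact Real.sqrt_le_sqrt (by nlinarith)

namespace SimpleGraph

lemma card_edgeFinset_fromEdgeSet {V : Type*} {E : Finset (Sym2 V)}
    [Fintype (fromEdgeSet (E : Set (Sym2 V))).edgeSet] (hE : ∀ e ∈ E, ¬ e.IsDiag) :
    #(fromEdgeSet (E : Set (Sym2 V))).edgeFinset = #E := by
  congr 1
  ext e
  simpa [edgeSet_fromEdgeSet] using hE e

variable {V : Type*} [Fintype V] [DecidableEq V] (G : SimpleGraph V) [DecidableRel G.Adj]

lemma sum_card_filter_mem_cliqueFinset (n : ℕ) :
    ∑ v, #{s ∈ G.cliqueFinset n | v ∈ s} = n * #(G.cliqueFinset n) := by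
  calc ∑ v, #{s ∈ G.cliqueFinset n | v ∈ s} = ∑ s ∈ G.cliqueFinset n, #s := by
        simp_rw [card_eq_sum_ones, sum_filter, sum_comm (s := univ), ← sum_filter, filter_univ_mem]
    _ = n * #(G.cliqueFinset n) := by
        rw [sum_const_nat fun s hs ↦ (mem_cliqueFinset_iff.mp hs).card_eq, mul_comm]

lemma card_filter_mem_cliqueFinset_three_le_card_edgeFinset (v : V) :
    #{s ∈ G.cliqueFinset 3 | v ∈ s} ≤ #G.edgeFinset := by
  refine card_le_card_of_surjOn (fun e ↦ insert v e.toFinset) fun s hs ↦ ?_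
  obtain ⟨hs, hv⟩ := mem_filter.mp hs
  obtain ⟨hclique, hcard⟩ := (mem_cliqueFinset_iff.mp hs).erase_of_mem hv
  obtain ⟨a, b, hab, hpair⟩ := card_eq_two.mp hcard
  refine ⟨s(a, b), ?_, ?_⟩
  · rw [hpair, coe_pair, isClique_pair] at hclique
    simpa using hclique hab
  · simp only [Sym2.toFinset_mk_eq, ← hpair, insert_erase hv]

lemma card_filter_mem_cliqueFinset_three_le_degree_sq (v : V) :
    (#{s ∈ G.cliqueFinset 3 | v ∈ s} : ℝ) ≤ G.degree v ^ 2 / 2 := by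
  have hchoose : #{s ∈ G.cliqueFinset 3 | v ∈ s} ≤ (G.degree v).choose 2 := by
    rw [← card_neighborFinset_eq_degree, ← card_powersetCard]
    refine card_le_card_of_injOn (·.erase v) (fun s hs ↦ ?_)
      ((erase_injOn' v).mono fun s hs ↦ (mem_filter.mp hs).2)
    obtain ⟨hs, hv⟩ := mem_filter.mp hs
    obtain ⟨hclique, hcard⟩ := (mem_cliqueFinset_iff.mp hs).erase_of_mem hv
    refine mem_powersetCard.mpr ⟨fun w hw ↦ ?_, hcard⟩
    rw [mem_neighborFinset]
    exact (mem_cliqueFinset_iff.mp hs).isClique hv (mem_of_mem_erase hw) (ne_of_mem_erase hw).symm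
  calc (#{s ∈ G.cliqueFinset 3 | v ∈ s} : ℝ) ≤ (G.degree v).choose 2 := by exact_mod_cast hchoose
    _ ≤ G.degree v ^ 2 / 2 := by simpa using Nat.choose_le_pow_div (α := ℝ) 2 (G.degree v)

theorem card_cliqueFinset_three_le :
    (#(G.cliqueFinset 3) : ℝ) ≤ √2 / 3 * (#G.edgeFinset : ℝ) ^ ((3 : ℝ) / 2) := by
  have hcount : 3 * (#(G.cliqueFinset 3) : ℝ) ≤ 2 * #G.edgeFinset * √(#G.edgeFinset / 2) :=
    calc 3 * (#(G.cliqueFinset 3) : ℝ) = ∑ v, (#{s ∈ G.cliqueFinset 3 | v ∈ s} : ℝ) := by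
          exact_mod_cast (G.sum_card_filter_mem_cliqueFinset 3).symm
      _ ≤ ∑ v, (G.degree v : ℝ) * √(#G.edgeFinset / 2) := sum_le_sum fun v _ ↦
          le_mul_sqrt_div_two_of_le_of_le_sq_div_two (Nat.cast_nonneg _)
            (mod_cast G.card_filter_mem_cliqueFinset_three_le_card_edgeFinset v)
            (G.card_filter_mem_cliqueFinset_three_le_degree_sq v)
      _ = 2 * #G.edgeFinset * √(#G.edgeFinset / 2) := by
          rw [← sum_mul, ← Nat.cast_sum, G.sum_degrees_eq_twice_card_edges, Nat.cast_mul,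
            Nat.cast_two]
  set q : ℝ := ((#G.edgeFinset : ℕ) : ℝ)
  have hq : 0 ≤ q := Nat.cast_nonneg _
  have hpow : q ^ ((3 : ℝ) / 2) = q * √q := by
    rw [show (3 : ℝ) / 2 = 1 + 1 / 2 by norm_num, Real.rpow_add' hq (by norm_num), Real.rpow_one,
      Real.sqrt_eq_rpow]
  have hsqrt : 2 * q * √(q / 2) = √2 * (q * √q) := by
    rw [Real.sqrt_div' q zero_le_two]
    field_simp
    rw [Real.sq_sqrt zero_le_two]
    ring
  rw [hpow]
  linarith

end SimpleGraph

/-- A set of `q` edges (unordered pairs of distinct nodes) contains at most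
`(√2/3)·q^{3/2}` triangles: 3-element node sets all of whose pairwise edges
lie in the set. -/
theorem triangle_count_bound {V : Type} [Fintype V] [DecidableEq V]
    (E : Finset (Sym2 V)) (hE : ∀ e ∈ E, ¬ e.IsDiag) (q : ℕ) (hq : E.card = q) :
    (((Finset.univ : Finset (Finset V)).filter
        (fun T => T.card = 3 ∧ ∀ u ∈ T, ∀ v ∈ T, u ≠ v → s(u, v) ∈ E)).card : ℝ)
      ≤ Real.sqrt 2 / 3 * (q : ℝ) ^ ((3 : ℝ) / 2) := by
  classical
  let G := SimpleGraph.fromEdgeSet (E : Set (Sym2 V))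
  rw [← hq]
  convert G.card_cliqueFinset_three_le using 4
  · ext T
    simp [G, SimpleGraph.mem_cliqueFinset_iff, SimpleGraph.isNClique_iff, SimpleGraph.IsClique,
      Set.Pairwise, and_comm, imp_and]
  · convert (SimpleGraph.card_edgeFinset_fromEdgeSet hE).symm
end

section
/- Suppose p reducers are assigned q₁,…,q_p edges of the complete graph on n nodes, each qᵢ ≤ q, and every triangle (3-element node subset) has all three of its edges assigned to at least one common reducer. Given that qᵢ edges contain at most (√2/3)·qᵢ^{3/2} triangles, the replication rate r = (Σᵢ qᵢ)/(n(n−1)/2) satisfies r ≥ c·n/√q for a suitable absolute constant c (ideally c approaching 1/√2, up to lower-order terms). -/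
/-- The number of triangles (3-element node sets with all three pairwise edges
present) contained in a set `E` of edges over node set `Fin n`. -/
def triangleCount (n : ℕ) (E : Finset (Sym2 (Fin n))) : ℕ :=
  ((Finset.univ : Finset (Finset (Fin n))).filter
      (fun T => T.card = 3 ∧ ∀ u ∈ T, ∀ v ∈ T, u ≠ v → s(u, v) ∈ E)).card

lemma tri_total_le (n p : ℕ) (R : Fin p → Finset (Sym2 (Fin n)))
    (hcover : ∀ u v w : Fin n, u ≠ v → u ≠ w → v ≠ w →
      ∃ i, s(u, v) ∈ R i ∧ s(u, w) ∈ R i ∧ s(v, w) ∈ R i) :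
    n.choose 3 ≤ ∑ i, triangleCount n (R i) := by
  have hS : ((Finset.univ : Finset (Finset (Fin n))).filter (fun T => T.card = 3)).card
      = n.choose 3 := by
    have : ((Finset.univ : Finset (Finset (Fin n))).filter (fun T => T.card = 3))
        = Finset.powersetCard 3 (Finset.univ : Finset (Fin n)) := by
      ext T
      simp [Finset.mem_powersetCard]
    rw [this, Finset.card_powersetCard, Finset.card_univ, Fintype.card_fin]
  rw [← hS]
  calc ((Finset.univ : Finset (Finset (Fin n))).filter (fun T => T.card = 3)).card
      ≤ (Finset.univ.biUnion (fun i : Fin p =>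
          (Finset.univ : Finset (Finset (Fin n))).filter
            (fun T => T.card = 3 ∧ ∀ u ∈ T, ∀ v ∈ T, u ≠ v → s(u, v) ∈ R i))).card := by
        apply Finset.card_le_card
        intro T hT
        simp only [Finset.mem_filter, Finset.mem_univ, true_and] at hT
        obtain ⟨u, v, w, huv, huw, hvw, rfl⟩ := Finset.card_eq_three.mp hT
        obtain ⟨i, h1, h2, h3⟩ := hcover u v w huv huw hvw
        rw [Finset.mem_biUnion]
        refine ⟨i, Finset.mem_univ i, ?_⟩
        simp only [Finset.mem_filter, Finset.mem_univ, true_and]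
        refine ⟨hT, ?_⟩
        intro a ha b hb hab
        simp only [Finset.mem_insert, Finset.mem_singleton] at ha hb
        rcases ha with rfl | rfl | rfl <;> rcases hb with rfl | rfl | rfl <;>
          first
            | exact absurd rfl hab
            | assumption
            | (rw [Sym2.eq_swap]; assumption)
    _ ≤ ∑ i, triangleCount n (R i) := Finset.card_biUnion_le

/-- Lower bound on replication rate for triangle finding: there is an absolute
constant `c > 0` such that for every mapping schema on the complete graph on
`n ≥ 3` nodes with reducer sizes `qᵢ ≤ q` covering every triangle, and
satisfying the bound that `qᵢ` edges contain at most `(√2/3)·qᵢ^{3/2}`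
triangles, the replication rate `(Σᵢ qᵢ)/(n(n−1)/2)` is at least `c·n/√q`. -/
theorem triangle_replication_lower_bound :
    ∃ c : ℝ, 0 < c ∧
      ∀ (n p q : ℕ) (R : Fin p → Finset (Sym2 (Fin n))),
        3 ≤ n →
        (∀ i, ∀ e ∈ R i, ¬ e.IsDiag) →
        (∀ i, (R i).card ≤ q) →
        (∀ u v w : Fin n, u ≠ v → u ≠ w → v ≠ w →
          ∃ i, s(u, v) ∈ R i ∧ s(u, w) ∈ R i ∧ s(v, w) ∈ R i) →
        (∀ i, (triangleCount n (R i) : ℝ) ≤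
          Real.sqrt 2 / 3 * ((R i).card : ℝ) ^ ((3 : ℝ) / 2)) →
        (∑ i, ((R i).card : ℝ)) / ((n : ℝ) * ((n : ℝ) - 1) / 2) ≥
          c * (n : ℝ) / Real.sqrt q := by
  refine ⟨1/5, by norm_num, ?_⟩
  intro n p q R hn hdiag hcard hcover hbound
  have hn3 : (3 : ℝ) ≤ (n : ℝ) := by exact_mod_cast hn
  have hSum : 0 ≤ ∑ i, ((R i).card : ℝ) :=
    Finset.sum_nonneg fun i _ => Nat.cast_nonneg _
  have hD : (0 : ℝ) < (n : ℝ) * ((n : ℝ) - 1) / 2 := by nlinarith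
  rcases Nat.eq_zero_or_pos q with hq0 | hq
  · rw [hq0, Nat.cast_zero, Real.sqrt_zero, div_zero]
    exact div_nonneg hSum hD.le
  have hq1 : (1 : ℝ) ≤ Real.sqrt q := by
    rw [show (1:ℝ) = Real.sqrt 1 by simp]
    exact Real.sqrt_le_sqrt (by exact_mod_cast hq)
  have hsq : (0 : ℝ) < Real.sqrt q := lt_of_lt_of_le one_pos hq1
  -- per-reducer: qᵢ^{3/2} ≤ √q * qᵢ
  have hpow : ∀ i : Fin p, ((R i).card : ℝ) ^ ((3:ℝ)/2) ≤ Real.sqrt q * ((R i).card : ℝ) := by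
    intro i
    set x : ℝ := ((R i).card : ℝ) with hx
    have hx0 : 0 ≤ x := Nat.cast_nonneg _
    have hxq : x ≤ (q : ℝ) := by rw [hx]; exact_mod_cast hcard i
    rcases eq_or_lt_of_le hx0 with h0 | h0
    · rw [← h0, Real.zero_rpow (by norm_num)]
      positivity
    · have : x ^ ((3:ℝ)/2) = x * Real.sqrt x := by
        rw [show (3:ℝ)/2 = 1 + 1/2 by norm_num, Real.rpow_add h0, Real.rpow_one,
          Real.sqrt_eq_rpow]
      rw [this]
      have : Real.sqrt x ≤ Real.sqrt q := Real.sqrt_le_sqrt hxq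
      nlinarith
  -- counting
  have hcount : ((n : ℝ) * ((n:ℝ) - 1) * ((n:ℝ) - 2)) / 6 ≤ (n.choose 3 : ℝ) := by
    have hd : (6 : ℕ) * n.choose 3 = n.descFactorial 3 := by
      rw [Nat.descFactorial_eq_factorial_mul_choose]; norm_num [Nat.factorial]
    have hdf : n.descFactorial 3 = n * (n - 1) * (n - 2) := by
      simp [Nat.descFactorial]; ring
    have h1 : ((n - 1 : ℕ) : ℝ) = (n : ℝ) - 1 := by
      rw [Nat.cast_sub (by omega)]; norm_num
    have h2 : ((n - 2 : ℕ) : ℝ) = (n : ℝ) - 2 := by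
      rw [Nat.cast_sub (by omega)]; norm_num
    have : (6 : ℝ) * (n.choose 3 : ℝ) = (n : ℝ) * ((n:ℝ) - 1) * ((n:ℝ) - 2) := by
      rw [← h1, ← h2]
      exact_mod_cast congrArg (Nat.cast : ℕ → ℝ) (hd.trans hdf)
    linarith
  have htot : (n.choose 3 : ℝ) ≤ ∑ i, (triangleCount n (R i) : ℝ) := by
    exact_mod_cast tri_total_le n p R hcover
  have hchain : ((n : ℝ) * ((n:ℝ) - 1) * ((n:ℝ) - 2)) / 6 ≤
      Real.sqrt 2 / 3 * (Real.sqrt q * ∑ i, ((R i).card : ℝ)) := by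
    calc ((n : ℝ) * ((n:ℝ) - 1) * ((n:ℝ) - 2)) / 6
        ≤ ∑ i, (triangleCount n (R i) : ℝ) := hcount.trans htot
      _ ≤ ∑ i, Real.sqrt 2 / 3 * ((R i).card : ℝ) ^ ((3:ℝ)/2) :=
          Finset.sum_le_sum fun i _ => hbound i
      _ ≤ ∑ i, Real.sqrt 2 / 3 * (Real.sqrt q * ((R i).card : ℝ)) := by
          apply Finset.sum_le_sum
          intro i _
          have := hpow i
          have h2 : (0:ℝ) ≤ Real.sqrt 2 / 3 := by positivity
          nlinarith
      _ = Real.sqrt 2 / 3 * (Real.sqrt q * ∑ i, ((R i).card : ℝ)) := by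
          rw [Finset.mul_sum, Finset.mul_sum]
  have s2sq : Real.sqrt 2 ^ 2 = 2 := Real.sq_sqrt (by norm_num)
  have s2nn : (0:ℝ) ≤ Real.sqrt 2 := Real.sqrt_nonneg 2
  have hs2 : (1.4 : ℝ) ≤ Real.sqrt 2 := by nlinarith
  -- key: √2 * n(n-1)(n-2) ≤ 4 * (√q * Σ)
  have key2 : Real.sqrt 2 * ((n : ℝ) * ((n:ℝ) - 1) * ((n:ℝ) - 2)) ≤
      4 * (Real.sqrt q * ∑ i, ((R i).card : ℝ)) := by
    nlinarith [mul_le_mul_of_nonneg_left hchain s2nn, mul_nonneg hsq.le hSum]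
  rw [ge_iff_le, div_le_div_iff₀ hsq hD]
  nlinarith [key2, hs2, mul_nonneg (mul_nonneg (by linarith : (0:ℝ) ≤ (n:ℝ)) (by linarith : (0:ℝ) ≤ (n:ℝ) - 1)) (by linarith : (0:ℝ) ≤ (n:ℝ) - 2),
    mul_nonneg (by linarith : (0:ℝ) ≤ (n:ℝ)) (by linarith : (0:ℝ) ≤ (n:ℝ) - 1)]
end

section
/- Suppose p reducers are assigned q₁,…,q_p edges of the complete graph on n nodes, each qᵢ ≤ q, and for every ordered path of length two v–u–w (u, v, w distinct nodes) both edges {u,v} and {u,w} are assigned to a common reducer. Then the replication rate r = (Σᵢ qᵢ)/C(n,2) satisfies r ≥ (n−2)/q. -/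
open Finset

lemma two_path_key (n p q : ℕ) (R : Fin p → Finset (Sym2 (Fin n)))
    (hsize : ∀ i, (R i).card ≤ q)
    (hcover : ∀ u v w : Fin n, v ≠ u → w ≠ u → v ≠ w →
      ∃ i, s(u, v) ∈ R i ∧ s(u, w) ∈ R i) :
    n.descFactorial 3 ≤ q * ∑ i, (R i).card := by
  classical
  set T : Finset (Fin p × Sym2 (Fin n) × Sym2 (Fin n)) :=
    univ.biUnion (fun i => {i} ×ˢ (R i ×ˢ R i)) with hT
  have hd : ∀ e : Fin 3 ↪ Fin n, e 1 ≠ e 0 ∧ e 2 ≠ e 0 ∧ e 1 ≠ e 2 := by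
    intro e
    exact ⟨e.injective.ne (by decide), e.injective.ne (by decide),
      e.injective.ne (by decide)⟩
  have hex : ∀ e : Fin 3 ↪ Fin n, ∃ i, s(e 0, e 1) ∈ R i ∧ s(e 0, e 2) ∈ R i := by
    intro e
    exact hcover _ _ _ (hd e).1 (hd e).2.1 (hd e).2.2
  let f : (Fin 3 ↪ Fin n) → Fin p × Sym2 (Fin n) × Sym2 (Fin n) :=
    fun e => ((hex e).choose, s(e 0, e 1), s(e 0, e 2))
  have hmem : ∀ e, f e ∈ T := by
    intro e
    simp only [hT, mem_biUnion, mem_product, mem_singleton, mem_univ]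
    exact ⟨(hex e).choose, trivial, rfl, (hex e).choose_spec.1, (hex e).choose_spec.2⟩
  have hinj : Function.Injective f := by
    intro a b hab
    have h1 : s(a 0, a 1) = s(b 0, b 1) := congrArg (fun x => x.2.1) hab
    have h2 : s(a 0, a 2) = s(b 0, b 2) := congrArg (fun x => x.2.2) hab
    rw [Sym2.eq_iff] at h1 h2
    have hda := hd a
    have hdb := hd b
    have key : a 0 = b 0 ∧ a 1 = b 1 ∧ a 2 = b 2 := by
      rcases h1 with ⟨e1, e2⟩ | ⟨e1, e2⟩ <;> rcases h2 with ⟨e3, e4⟩ | ⟨e3, e4⟩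
      · exact ⟨e1, e2, e4⟩
      · exact absurd (e1.symm.trans e3) hdb.2.1.symm
      · exact absurd (e1.symm.trans e3) hdb.1
      · exact absurd (e1.symm.trans e3) hdb.2.2
    apply Function.Embedding.ext
    intro x
    fin_cases x
    · simpa using key.1
    · simpa using key.2.1
    · simpa using key.2.2
  have hcard : Fintype.card (Fin 3 ↪ Fin n) ≤ T.card := by
    rw [← Finset.card_univ]
    exact Finset.card_le_card_of_injOn f (fun e _ => hmem e) (hinj.injOn)
  have hTc : T.card ≤ ∑ i, (R i).card * (R i).card := by
    refine (Finset.card_biUnion_le).trans ?_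
    apply Finset.sum_le_sum
    intro i _
    simp [Finset.card_product]
  have h1 : Fintype.card (Fin 3 ↪ Fin n) = n.descFactorial 3 := by
    simp [Fintype.card_embedding_eq]
  calc n.descFactorial 3 ≤ ∑ i, (R i).card * (R i).card := by
        rw [← h1]; exact hcard.trans hTc
    _ ≤ ∑ i, q * (R i).card := by
        exact Finset.sum_le_sum (fun i _ => Nat.mul_le_mul_right _ (hsize i))
    _ = q * ∑ i, (R i).card := by rw [Finset.mul_sum]

/-- Lower bound on replication rate for finding 2-paths: if `p` reducers each
receive at most `q` edges of the complete graph on `n` nodes and, for every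
2-path `v–u–w` (with `u`, `v`, `w` distinct), both edges `{u,v}` and `{u,w}`
are assigned to a common reducer, then the replication rate
`(Σᵢ qᵢ)/C(n,2)` is at least `(n−2)/q`. -/
theorem two_path_replication_lower_bound
    (n p q : ℕ) (R : Fin p → Finset (Sym2 (Fin n)))
    (hsize : ∀ i, (R i).card ≤ q)
    (hcover : ∀ u v w : Fin n, v ≠ u → w ≠ u → v ≠ w →
      ∃ i, s(u, v) ∈ R i ∧ s(u, w) ∈ R i) :
    (∑ i, ((R i).card : ℝ)) / (n.choose 2 : ℝ) ≥ ((n : ℝ) - 2) / q := by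
  have hL0 : (0:ℝ) ≤ (∑ i, ((R i).card : ℝ)) / (n.choose 2 : ℝ) := by
    apply div_nonneg
    · exact Finset.sum_nonneg (fun i _ => by positivity)
    · positivity
  rcases le_or_gt n 2 with hn | hn
  · refine le_trans ?_ hL0
    apply div_nonpos_of_nonpos_of_nonneg
    · have : (n:ℝ) ≤ 2 := by exact_mod_cast hn
      linarith
    · positivity
  · -- n ≥ 3
    rcases Nat.eq_zero_or_pos q with hq | hq
    · exfalso
      have h3 : 3 ≤ n := hn
      let u : Fin n := ⟨0, by omega⟩
      let v : Fin n := ⟨1, by omega⟩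
      let w : Fin n := ⟨2, by omega⟩
      obtain ⟨i, hi, _⟩ := hcover u v w (by simp [u, v, Fin.ext_iff])
        (by simp [u, w, Fin.ext_iff]) (by simp [v, w, Fin.ext_iff])
      have := hsize i
      rw [hq, Nat.le_zero, Finset.card_eq_zero] at this
      simp [this] at hi
    · have key := two_path_key n p q R hsize hcover
      have hdesc : n.descFactorial 3 = n * (n-1) * (n-2) := by
        simp [Nat.descFactorial]; ring
      rw [hdesc] at key
      have keyR : (n:ℝ) * ((n:ℝ) - 1) * ((n:ℝ) - 2) ≤ (q:ℝ) * ∑ i, ((R i).card : ℝ) := by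
        have := (Nat.cast_le (α := ℝ)).2 key
        push_cast [Nat.cast_sub (show 1 ≤ n by omega),
          Nat.cast_sub (show 2 ≤ n by omega)] at this
        convert this using 2
      have hchoose : (n.choose 2 : ℝ) = (n:ℝ) * ((n:ℝ) - 1) / 2 := by
        rw [Nat.cast_choose_two]
      have hcpos : (0:ℝ) < (n.choose 2 : ℝ) := by
        rw [hchoose]
        have : (3:ℝ) ≤ (n:ℝ) := by exact_mod_cast hn
        nlinarith
      have hqpos : (0:ℝ) < (q:ℝ) := by exact_mod_cast hq
      rw [ge_iff_le, div_le_div_iff₀ hqpos hcpos, hchoose]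
      have h3 : (3:ℝ) ≤ (n:ℝ) := by exact_mod_cast hn
      nlinarith [Finset.sum_nonneg (fun i (_ : i ∈ univ) => by positivity : ∀ i ∈ univ, (0:ℝ) ≤ ((R i).card:ℝ))]
end

section
/- Fix a node set of size n, an integer k with k² dividing n, and a hash function h from nodes to {1,…,k} (buckets). Create a reducer for each pair [u, {i,j}] with u a node and i ≠ j bucket numbers, and send each edge {a,b} to all reducers [b, {h(a), *}] and [a, {*, h(b)}] (where * ranges over bucket numbers different from the other element of the set). Then every 2-path v–u–w (v, w ≠ u, v ≠ w) has both its edges {u,v} and {u,w} sent to a common reducer. -/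
/-- Edge `{a,b}` is sent to reducer `[u, {i,j}]` iff `u = b` and the hash of
`a` is in `{i,j}`, or `u = a` and the hash of `b` is in `{i,j}`. -/
def SentTo {n k : ℕ} (h : Fin n → Fin k) (a b u : Fin n) (i j : Fin k) : Prop :=
  (u = b ∧ (h a = i ∨ h a = j)) ∨ (u = a ∧ (h b = i ∨ h b = j))

/-- Correctness of the hashing scheme for 2-paths: with `k ≥ 2` buckets,
`k²` dividing `n`, and hash function `h`, every 2-path `v–u–w` (with
`v, w ≠ u`, `v ≠ w`) has both its edges `{u,v}` and `{u,w}` sent to a common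
reducer `[u, {i,j}]` with `i ≠ j`. -/
theorem hash_scheme_covers_two_paths
    (n k : ℕ) (hk : 2 ≤ k) (hdvd : k ^ 2 ∣ n) (h : Fin n → Fin k) :
    ∀ u v w : Fin n, v ≠ u → w ≠ u → v ≠ w →
      ∃ i j : Fin k, i ≠ j ∧ SentTo h u v u i j ∧ SentTo h u w u i j := by
  intro u v w _ _ _
  by_cases hvw : h v = h w
  · obtain ⟨j, hj⟩ : ∃ j : Fin k, j ≠ h v := by
      have : Nontrivial (Fin k) := Fin.nontrivial_iff_two_le.mpr hk
      exact exists_ne (h v)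
    exact ⟨h v, j, (Ne.symm hj), Or.inr ⟨rfl, Or.inl rfl⟩,
      Or.inr ⟨rfl, Or.inl hvw.symm⟩⟩
  · exact ⟨h v, h w, hvw, Or.inr ⟨rfl, Or.inl rfl⟩, Or.inr ⟨rfl, Or.inr rfl⟩⟩
end

section
/- Suppose p reducers each receive qᵢ ≤ q inputs from the 2n² entries of two n×n matrices R and S, where each reducer covers at most qᵢ²/(4n²) entries of the product, and together they cover all n² entries of the product. Then the replication rate r = (Σᵢ qᵢ)/(2n²) satisfies r ≥ 2n²/q. -/
/-- Lower bound on replication rate for one-round `n×n` matrix multiplication: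
if `p` reducers receive `qᵢ ≤ q` of the `2n²` matrix entries, each reducer
covers at most `qᵢ²/(4n²)` output entries, and together they cover all `n²`
output entries, then the replication rate `(Σᵢ qᵢ)/(2n²)` is at least
`2n²/q`. -/
theorem matrix_mult_replication_lower_bound
    (n p q : ℕ) (hn : 0 < n) (hq : 0 < q)
    (qs : Fin p → ℕ) (cov : Fin p → Finset (Fin n × Fin n))
    (hsize : ∀ i, qs i ≤ q)
    (hcov : ∀ i, ((cov i).card : ℝ) ≤ (qs i : ℝ) ^ 2 / (4 * (n : ℝ) ^ 2))
    (hall : ∀ t : Fin n × Fin n, ∃ i, t ∈ cov i) :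
    (∑ i, (qs i : ℝ)) / (2 * (n : ℝ) ^ 2) ≥ 2 * (n : ℝ) ^ 2 / q := by
  have hnR : (0:ℝ) < (n:ℝ) := by exact_mod_cast hn
  have hqR : (0:ℝ) < (q:ℝ) := by exact_mod_cast hq
  -- total coverage ≥ n²
  have hsub : (Finset.univ : Finset (Fin n × Fin n)) ⊆ Finset.univ.biUnion cov := by
    intro t _
    obtain ⟨i, hi⟩ := hall t
    exact Finset.mem_biUnion.mpr ⟨i, Finset.mem_univ i, hi⟩
  have hcard : (n : ℝ)^2 ≤ ∑ i, ((cov i).card : ℝ) := by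
    have h1 : (Finset.univ : Finset (Fin n × Fin n)).card ≤ ∑ i, (cov i).card :=
      le_trans (Finset.card_le_card hsub) (Finset.card_biUnion_le)
    have h2 : (Finset.univ : Finset (Fin n × Fin n)).card = n * n := by simp
    rw [h2] at h1
    have := (Nat.cast_le (α := ℝ)).mpr h1
    push_cast at this
    nlinarith [this]
  -- bound sum of covers by q * Σ qs / (4n²)
  have hstep : ∑ i, ((cov i).card : ℝ) ≤ (q : ℝ) * (∑ i, (qs i : ℝ)) / (4 * (n:ℝ)^2) := by
    calc ∑ i, ((cov i).card : ℝ) ≤ ∑ i, (qs i : ℝ)^2 / (4 * (n:ℝ)^2) :=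
          Finset.sum_le_sum fun i _ => hcov i
      _ ≤ ∑ i, (q : ℝ) * (qs i : ℝ) / (4 * (n:ℝ)^2) := by
          apply Finset.sum_le_sum
          intro i _
          have hle : (qs i : ℝ) ≤ q := by exact_mod_cast hsize i
          have hpos : (0:ℝ) < 4 * (n:ℝ)^2 := by positivity
          have hnum : (qs i : ℝ)^2 ≤ (q:ℝ) * (qs i : ℝ) := by
            nlinarith [Nat.cast_nonneg (α := ℝ) (qs i)]
          gcongr
      _ = (q : ℝ) * (∑ i, (qs i : ℝ)) / (4 * (n:ℝ)^2) := by
          rw [Finset.mul_sum, Finset.sum_div]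
  have key : (4:ℝ) * (n:ℝ)^4 ≤ (q:ℝ) * (∑ i, (qs i : ℝ)) := by
    have hpos : (0:ℝ) < 4 * (n:ℝ)^2 := by positivity
    have := le_trans hcard hstep
    rw [le_div_iff₀ hpos] at this
    nlinarith [this]
  rw [ge_iff_le, div_le_div_iff₀ hqR (by positivity : (0:ℝ) < 2 * (n:ℝ)^2)]
  nlinarith [key]
end

section
/- Let s divide n and q = 2sn. Partition the rows of an n×n matrix R into n/s groups of s rows and the columns of an n×n matrix S into n/s groups of s columns, and create a reducer for each pair (G, H) of a row-group and a column-group, receiving all entries of R in rows of G and all entries of S in columns of H. Then each reducer receives exactly 2sn inputs, every output entry t_{ik} is covered by exactly one reducer, and the replication rate equals n/s = 2n²/q. -/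
/-- The reducer for the pair `(g, h)` of a row-group and a column-group
receives all entries of `R` (encoded `Sum.inl (i,j)`) whose row `i` lies in
group `g` and all entries of `S` (encoded `Sum.inr (j,k)`) whose column `k`
lies in group `h`, where row `i` belongs to group `⌊i/s⌋`. -/
def tileReducer (n s : ℕ) (g h : Fin (n / s)) :
    Finset ((Fin n × Fin n) ⊕ (Fin n × Fin n)) :=
  (Finset.univ.filter (fun ij : Fin n × Fin n => ij.1.val / s = g.val)).map
      ⟨Sum.inl, Sum.inl_injective⟩ ∪
    (Finset.univ.filter (fun jk : Fin n × Fin n => jk.2.val / s = h.val)).map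
      ⟨Sum.inr, Sum.inr_injective⟩

lemma div_eq_iff_aux {s i g : ℕ} (hs : 0 < s) :
    i / s = g ↔ g * s ≤ i ∧ i < (g + 1) * s := by
  constructor
  · rintro rfl
    exact ⟨Nat.div_mul_le_self i s, (Nat.div_lt_iff_lt_mul hs).1 (Nat.lt_succ_self _)⟩
  · rintro ⟨h1, h2⟩
    have h3 : g ≤ i / s := (Nat.le_div_iff_mul_le hs).2 h1
    have h4 : i / s < g + 1 := (Nat.div_lt_iff_lt_mul hs).2 h2
    omega

lemma rowCard (n s : ℕ) (hs : 0 < s) (g : ℕ) (hg : (g + 1) * s ≤ n) :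
    ((Finset.univ : Finset (Fin n)).filter (fun i => i.val / s = g)).card = s := by
  classical
  have hmap : ((Finset.univ : Finset (Fin n)).filter (fun i => i.val / s = g)).card
      = ((Finset.range n).filter (fun i => i / s = g)).card := by
    rw [← Nat.Iio_eq_range, ← Fin.map_valEmbedding_univ, Finset.filter_map,
      Finset.card_map]
    congr 1
  rw [hmap]
  have : (Finset.range n).filter (fun i => i / s = g) = Finset.Ico (g * s) ((g + 1) * s) := by
    ext a
    simp only [Finset.mem_filter, Finset.mem_range, Finset.mem_Ico, div_eq_iff_aux hs]
    omega
  rw [this, Nat.card_Ico]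
  have : (g + 1) * s = g * s + s := by ring
  omega

lemma mem_inl_tileReducer {n s : ℕ} {g h : Fin (n / s)} {i j : Fin n} :
    Sum.inl (i, j) ∈ tileReducer n s g h ↔ i.val / s = g.val := by
  simp [tileReducer]

lemma mem_inr_tileReducer {n s : ℕ} {g h : Fin (n / s)} {j k : Fin n} :
    Sum.inr (j, k) ∈ tileReducer n s g h ↔ k.val / s = h.val := by
  simp [tileReducer]

lemma tileCard (n s : ℕ) (hs : 0 < s) (hdvd : s ∣ n) (g h : Fin (n / s)) :
    (tileReducer n s g h).card = 2 * s * n := by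
  classical
  have hmul : s * (n / s) = n := Nat.mul_div_cancel' hdvd
  have key : ∀ g : Fin (n / s),
      ((Finset.univ : Finset (Fin n)).filter (fun i => i.val / s = g.val)).card = s := by
    intro g
    apply rowCard n s hs
    have := g.isLt
    nlinarith [g.isLt]
  have cardL : ((Finset.univ : Finset (Fin n × Fin n)).filter
      (fun ij => ij.1.val / s = g.val)).card = s * n := by
    have : (Finset.univ : Finset (Fin n × Fin n)).filter (fun ij => ij.1.val / s = g.val)
        = ((Finset.univ : Finset (Fin n)).filter (fun i => i.val / s = g.val)) ×ˢ
          (Finset.univ : Finset (Fin n)) := by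
      ext ⟨a, b⟩; simp
    rw [this, Finset.card_product, key, Finset.card_univ, Fintype.card_fin]
  have cardR : ((Finset.univ : Finset (Fin n × Fin n)).filter
      (fun jk => jk.2.val / s = h.val)).card = s * n := by
    have : (Finset.univ : Finset (Fin n × Fin n)).filter (fun jk => jk.2.val / s = h.val)
        = (Finset.univ : Finset (Fin n)) ×ˢ
          ((Finset.univ : Finset (Fin n)).filter (fun k => k.val / s = h.val)) := by
      ext ⟨a, b⟩; simp
    rw [this, Finset.card_product, key, Finset.card_univ, Fintype.card_fin]
    ring
  have hdisj : Disjoint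
      (((Finset.univ : Finset (Fin n × Fin n)).filter
        (fun ij => ij.1.val / s = g.val)).map ⟨Sum.inl, Sum.inl_injective⟩)
      (((Finset.univ : Finset (Fin n × Fin n)).filter
        (fun jk => jk.2.val / s = h.val)).map ⟨Sum.inr, Sum.inr_injective⟩) := by
    simp [Finset.disjoint_left]
  rw [tileReducer, Finset.card_union_of_disjoint hdisj, Finset.card_map, Finset.card_map,
    cardL, cardR]
  ring

/-- The one-round tiling algorithm for `n×n` matrix multiplication with `s ∣ n`
and `q = 2sn`: each reducer receives exactly `2sn` inputs, every output entry
`(i,k)` is covered by exactly one reducer (i.e. exactly one reducer receives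
all of row `i` of `R` and all of column `k` of `S`), and the replication rate
equals `n/s = 2n²/q`. -/
theorem tiling_algorithm (n s q : ℕ) (hs : 0 < s) (hdvd : s ∣ n)
    (hq : q = 2 * s * n) :
    (∀ g h : Fin (n / s), (tileReducer n s g h).card = 2 * s * n) ∧
    (∀ i k : Fin n, ∃! gh : Fin (n / s) × Fin (n / s),
        (∀ j : Fin n, Sum.inl (i, j) ∈ tileReducer n s gh.1 gh.2) ∧
        (∀ j : Fin n, Sum.inr (j, k) ∈ tileReducer n s gh.1 gh.2)) ∧
    (∑ gh : Fin (n / s) × Fin (n / s), ((tileReducer n s gh.1 gh.2).card : ℝ))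
        / (2 * (n : ℝ) ^ 2) = (n : ℝ) / s ∧
    (n : ℝ) / s = 2 * (n : ℝ) ^ 2 / q := by
  have hcard := tileCard n s hs hdvd
  have hmul : s * (n / s) = n := Nat.mul_div_cancel' hdvd
  refine ⟨hcard, ?_, ?_, ?_⟩
  · intro i k
    refine ⟨(⟨i.val / s, Nat.div_lt_div_of_lt_of_dvd hdvd i.isLt⟩,
             ⟨k.val / s, Nat.div_lt_div_of_lt_of_dvd hdvd k.isLt⟩), ⟨?_, ?_⟩, ?_⟩
    · intro j; exact mem_inl_tileReducer.2 rfl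
    · intro j; exact mem_inr_tileReducer.2 rfl
    · rintro ⟨g, h⟩ ⟨h1, h2⟩
      have e1 : i.val / s = g.val := mem_inl_tileReducer.1 (h1 i)
      have e2 : k.val / s = h.val := mem_inr_tileReducer.1 (h2 k)
      ext <;> simp [← e1, ← e2]
  · have hsum : (∑ gh : Fin (n / s) × Fin (n / s),
        ((tileReducer n s gh.1 gh.2).card : ℝ))
        = ((n / s : ℕ) : ℝ) ^ 2 * (2 * s * n) := by
      have hval : ∀ gh : Fin (n / s) × Fin (n / s),
          ((tileReducer n s gh.1 gh.2).card : ℝ) = 2 * s * n := fun gh => by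
        rw [hcard]; push_cast; ring
      rw [Finset.sum_congr rfl (fun gh _ => hval gh), Finset.sum_const,
        Finset.card_univ, Fintype.card_prod, Fintype.card_fin]
      ring
    rw [hsum]
    rcases Nat.eq_zero_or_pos (n / s) with hm | hm
    · have hn0 : n = 0 := by rw [hm, Nat.mul_zero] at hmul; omega
      simp [hm, hn0]
    · have hn : (n : ℝ) = (s : ℝ) * ((n / s : ℕ) : ℝ) := by
        exact_mod_cast hmul.symm
      have hs' : (0:ℝ) < (s : ℝ) := by exact_mod_cast hs
      have hm' : (0:ℝ) < ((n / s : ℕ) : ℝ) := by exact_mod_cast hm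
      rw [hn, div_eq_div_iff (by positivity) (by positivity)]
      ring
  · subst hq
    rcases Nat.eq_zero_or_pos n with hn | hn
    · simp [hn]
    · have hs' : (s : ℝ) ≠ 0 := by positivity
      have hn' : (n : ℝ) ≠ 0 := by positivity
      have h2 : (0:ℝ) < 2 * s * n := by positivity
      push_cast
      rw [div_eq_div_iff (by positivity) (by exact_mod_cast h2.ne')]
      ring
end

section
/- Suppose p reducers receive q₁,…,q_p inputs each with qᵢ ≤ q, a reducer with m inputs covers at most m^ρ outputs (for a fixed ρ ≥ 1), and together they cover at least n^m₀ outputs (m₀ a fixed integer ≥ 2). If the total number of inputs is n², then the replication rate r = (Σᵢ qᵢ)/n² satisfies r ≥ n^{m₀−2}/q^{ρ−1}. -/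
/-- Generic multiway-join lower bound: if a reducer with `m` inputs covers at
most `m^ρ` outputs (`ρ ≥ 1`), the `p` reducers (sizes `qᵢ ≤ q`) together cover
at least `n^{m₀}` outputs (`m₀ ≥ 2`), and the total number of inputs is `n²`,
then the replication rate `(Σᵢ qᵢ)/n²` is at least `n^{m₀−2}/q^{ρ−1}`. -/
theorem multiway_join_replication_lower_bound
    (ρ : ℝ) (hρ : 1 ≤ ρ) (m₀ : ℕ) (hm₀ : 2 ≤ m₀)
    (n p q : ℕ) (hn : 0 < n)
    (qs cnt : Fin p → ℕ)
    (hsize : ∀ i, qs i ≤ q)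
    (hcnt : ∀ i, (cnt i : ℝ) ≤ ((qs i : ℝ)) ^ ρ)
    (htotal : (n : ℝ) ^ m₀ ≤ ∑ i, (cnt i : ℝ)) :
    (∑ i, (qs i : ℝ)) / (n : ℝ) ^ 2 ≥
      (n : ℝ) ^ (m₀ - 2) / ((q : ℝ)) ^ (ρ - 1) := by
  have hρ0 : ρ ≠ 0 := by linarith
  -- step: each qs i ^ ρ ≤ q^(ρ-1) * qs i
  have key : ∀ i, ((qs i : ℝ)) ^ ρ ≤ (q : ℝ) ^ (ρ - 1) * (qs i : ℝ) := by
    intro i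
    rcases eq_or_lt_of_le (Nat.cast_nonneg (qs i) : (0:ℝ) ≤ qs i) with h0 | h0
    · rw [← h0, Real.zero_rpow hρ0, mul_zero]
    · have hle : ((qs i : ℝ)) ≤ (q : ℝ) := by exact_mod_cast hsize i
      calc ((qs i : ℝ)) ^ ρ = (qs i : ℝ) ^ (ρ - 1) * (qs i : ℝ) := by
            rw [← Real.rpow_add_one (ne_of_gt h0)]; ring_nf
        _ ≤ (q : ℝ) ^ (ρ - 1) * (qs i : ℝ) :=
            mul_le_mul_of_nonneg_right
              (Real.rpow_le_rpow (le_of_lt h0) hle (by linarith)) (le_of_lt h0)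
  have hq0 : 0 < q := by
    by_contra hq
    push_neg at hq
    interval_cases q
    have : ∀ i, qs i = 0 := fun i => Nat.le_zero.mp (hsize i)
    have hsum : ∑ i, (cnt i : ℝ) ≤ 0 := by
      apply Finset.sum_nonpos
      intro i _
      simpa [this i, Real.zero_rpow hρ0] using hcnt i
    have hpow : (0:ℝ) < (n:ℝ) ^ m₀ := by positivity
    linarith
  have hqpos : (0:ℝ) < (q : ℝ) ^ (ρ - 1) := Real.rpow_pos_of_pos (by exact_mod_cast hq0) _
  have hsum : (n : ℝ) ^ m₀ ≤ (q : ℝ) ^ (ρ - 1) * ∑ i, (qs i : ℝ) := by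
    calc (n : ℝ) ^ m₀ ≤ ∑ i, (cnt i : ℝ) := htotal
      _ ≤ ∑ i, (q : ℝ) ^ (ρ - 1) * (qs i : ℝ) :=
          Finset.sum_le_sum (fun i _ => (hcnt i).trans (key i))
      _ = (q : ℝ) ^ (ρ - 1) * ∑ i, (qs i : ℝ) := by rw [Finset.mul_sum]
  have hnpos : (0:ℝ) < (n:ℝ) := by exact_mod_cast hn
  have hn2 : (0:ℝ) < (n:ℝ) ^ 2 := by positivity
  rw [ge_iff_le, div_le_div_iff₀ hqpos hn2]
  have hpow : (n : ℝ) ^ (m₀ - 2) * (n : ℝ) ^ 2 = (n : ℝ) ^ m₀ := by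
    rw [← pow_add]; congr 1; omega
  calc (n : ℝ) ^ (m₀ - 2) * (n : ℝ) ^ 2 = (n : ℝ) ^ m₀ := hpow
    _ ≤ (q : ℝ) ^ (ρ - 1) * ∑ i, (qs i : ℝ) := hsum
    _ = (∑ i, (qs i : ℝ)) * (q : ℝ) ^ (ρ - 1) := mul_comm _ _
end

section
/- For integers b ≥ 1 and q with 1 ≤ q ≤ 2^b, define the minimum replication rate r(q) as the minimum over all valid mapping schemas (assignments of the 2^b strings to reducers of size ≤ q covering all Hamming-distance-1 pairs) of (total assignments)/2^b. If c ≥ 2 divides b and q = 2^{b/c}, then r(q) = c, i.e., the lower bound b/log₂(q) is achieved exactly. -/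
/-!
A pair at Hamming distance 1 is an edge of the cube, and a set `S` of strings spans at most
`|S| log₂ |S|` ordered edges (the edge-isoperimetric inequality, by induction on the dimension:
when the first bit splits `S` into halves of sizes `s` and `t`, at most `min s t` edges join them).
The `b 2^b` ordered edges must all be spanned by reducers of size at most `2^m`, `m = b / c`, so
`m Σ |Rᵢ| ≥ b 2^b`, i.e. the replication rate is at least `c`.

Conversely, split the `b` coordinates into `c` groups of `m`. For a group `g`, the strings that
agree outside `g` form a reducer of size `2^m`; each string lies in exactly one reducer per group,
and two strings differing in one coordinate share the reducer of that coordinate's group.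
-/

open Finset Real

namespace Hypercube

section Flip

variable {ι : Type*} [DecidableEq ι]

def flipAt (j : ι) (u : ι → Bool) : ι → Bool :=
  Function.update u j (!u j)

lemma hammingDist_eq_one_iff [Fintype ι] {u v : ι → Bool} :
    hammingDist u v = 1 ↔ ∃ j, v = flipAt j u := by
  simp only [hammingDist, card_eq_one, Finset.ext_iff, mem_filter, mem_univ, true_and,
    mem_singleton]
  refine exists_congr fun j => ⟨fun h => funext fun i => ?_, fun h i => ?_⟩
  · by_cases hij : i = j
    · subst hij
      have := (h i).2 rfl
      cases hu : u i <;> cases hv : v i <;> simp_all [flipAt]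
    · simpa [flipAt, hij, eq_comm] using h i
  · subst h
    by_cases hij : i = j <;> simp [flipAt, hij]

lemma flipAt_zero_cons {n : ℕ} (a : Bool) (x : Fin n → Bool) :
    flipAt 0 (Fin.cons a x : Fin (n + 1) → Bool) = Fin.cons (!a) x := by
  simp [flipAt, Fin.update_cons_zero]

lemma flipAt_succ_cons {n : ℕ} (k : Fin n) (a : Bool) (x : Fin n → Bool) :
    flipAt k.succ (Fin.cons a x : Fin (n + 1) → Bool) = Fin.cons a (flipAt k x) := by
  simp [flipAt, Fin.cons_update]

end Flip

variable {ι : Type*} [Fintype ι] [DecidableEq ι]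

/-- Ordered pairs, so every edge of the cube inside `S` is counted twice. -/
def innerEdgeCount (S : Finset (ι → Bool)) : ℕ :=
  ∑ j, #{u | u ∈ S ∧ flipAt j u ∈ S}

lemma card_mul_two_pow_le_sum_innerEdgeCount {κ : Type*} [Fintype κ]
    (R : κ → Finset (ι → Bool))
    (hR : ∀ u v, hammingDist u v = 1 → ∃ i, u ∈ R i ∧ v ∈ R i) :
    Fintype.card ι * 2 ^ Fintype.card ι ≤ ∑ i, innerEdgeCount (R i) := by
  calc Fintype.card ι * 2 ^ Fintype.card ι = ∑ _j : ι, ∑ _u : ι → Bool, 1 := by simp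
    _ ≤ ∑ j, ∑ u, ∑ i, if u ∈ R i ∧ flipAt j u ∈ R i then 1 else 0 := by
        gcongr with j _ u _
        obtain ⟨i, hu, hv⟩ := hR u (flipAt j u) (hammingDist_eq_one_iff.2 ⟨j, rfl⟩)
        calc 1 = if u ∈ R i ∧ flipAt j u ∈ R i then 1 else 0 := by simp [hu, hv]
          _ ≤ _ := single_le_sum (f := fun i => if u ∈ R i ∧ flipAt j u ∈ R i then 1 else 0)
              (fun _ _ => Nat.zero_le _) (mem_univ i)
    _ = ∑ j, ∑ i, ∑ u, if u ∈ R i ∧ flipAt j u ∈ R i then 1 else 0 :=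
        sum_congr rfl fun _ _ => sum_comm
    _ = ∑ i, innerEdgeCount (R i) := by
        rw [sum_comm]
        simp only [innerEdgeCount, card_filter]

section Slice

variable {n : ℕ}

lemma card_filter_eq_sum_cons (P : (Fin (n + 1) → Bool) → Prop) [DecidablePred P] :
    #{u | P u} = ∑ a : Bool, #{x : Fin n → Bool | P (Fin.cons a x)} := by
  simp only [card_filter]
  rw [← (Fin.consEquiv fun _ => Bool).sum_comp, Fintype.sum_prod_type]
  rfl

def slice (a : Bool) (S : Finset (Fin (n + 1) → Bool)) : Finset (Fin n → Bool) :=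
  {x | Fin.cons a x ∈ S}

lemma card_eq_card_slice_add (S : Finset (Fin (n + 1) → Bool)) :
    #S = #(slice false S) + #(slice true S) := by
  conv_lhs => rw [← filter_univ_mem S, card_filter_eq_sum_cons, Fintype.sum_bool, add_comm]
  rfl

lemma innerEdgeCount_eq_slice (S : Finset (Fin (n + 1) → Bool)) :
    innerEdgeCount S = innerEdgeCount (slice false S) + innerEdgeCount (slice true S)
      + 2 * #(slice false S ∩ slice true S) := by
  have hzero : #{u | u ∈ S ∧ flipAt 0 u ∈ S} = 2 * #(slice false S ∩ slice true S) := by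
    rw [card_filter_eq_sum_cons, Fintype.sum_bool, slice, slice, ← filter_and]
    simp only [flipAt_zero_cons, Bool.not_true, Bool.not_false,
      and_comm (a := Fin.cons true _ ∈ S)]
    ring
  have hsucc (k : Fin n) : #{u | u ∈ S ∧ flipAt k.succ u ∈ S}
      = ∑ a, #{x | x ∈ slice a S ∧ flipAt k x ∈ slice a S} := by
    simp [card_filter_eq_sum_cons, flipAt_succ_cons, slice]
  rw [innerEdgeCount, Fin.sum_univ_succ, hzero, Finset.sum_congr rfl fun k _ => hsucc k,
    sum_comm, Fintype.sum_bool, innerEdgeCount, innerEdgeCount]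
  ring

end Slice

lemma le_logb_two_one_add {t : ℝ} (h0 : 0 ≤ t) (h1 : t ≤ 1) : t ≤ logb 2 (1 + t) := by
  rw [le_logb_iff_rpow_le one_lt_two (by linarith)]
  simpa [one_add_one_eq_two] using rpow_one_add_le_one_add_mul_self (s := 1) (by norm_num) h0 h1

lemma mul_logb_add_mul_logb_add_two_min_le {a b : ℝ} (ha : 0 ≤ a) (hb : 0 ≤ b) :
    a * logb 2 a + b * logb 2 b + 2 * min a b ≤ (a + b) * logb 2 (a + b) := by
  wlog hab : a ≤ b generalizing a b
  · have := this hb ha (le_of_not_ge hab)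
    rwa [min_comm, add_comm b, add_comm (b * _)] at this
  rw [min_eq_left hab]
  rcases ha.eq_or_lt with rfl | ha
  · simp
  have hb : 0 < b := ha.trans_le hab
  have hsmall : a ≤ a * logb 2 (a + b) - a * logb 2 a := by
    have : logb 2 (2 * a) ≤ logb 2 (a + b) :=
      logb_le_logb_of_le one_lt_two (by positivity) (by linarith)
    rw [logb_mul two_ne_zero ha.ne', logb_self_eq_one one_lt_two] at this
    nlinarith
  have hlarge : a ≤ b * logb 2 (a + b) - b * logb 2 b := by
    have := le_logb_two_one_add (t := a / b) (by positivity) ((div_le_one hb).2 hab)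
    rw [← mul_sub, ← logb_div (by positivity) hb.ne', add_div, div_self hb.ne', add_comm]
    calc a = b * (a / b) := by field_simp
      _ ≤ _ := mul_le_mul_of_nonneg_left this hb.le
  linarith

theorem innerEdgeCount_le {n : ℕ} (S : Finset (Fin n → Bool)) :
    (innerEdgeCount S : ℝ) ≤ #S * logb 2 #S := by
  induction n with
  | zero =>
    rw [innerEdgeCount, univ_eq_empty, sum_empty, Nat.cast_zero]
    exact mul_nonneg (Nat.cast_nonneg _)
      (div_nonneg (log_natCast_nonneg _) (log_nonneg one_le_two))
  | succ n ih =>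
    have hinter : #(slice false S ∩ slice true S) ≤ min #(slice false S) #(slice true S) :=
      le_min (card_le_card inter_subset_left) (card_le_card inter_subset_right)
    rw [innerEdgeCount_eq_slice, card_eq_card_slice_add]
    push_cast
    calc _ ≤ (#(slice false S) : ℝ) * logb 2 #(slice false S)
          + #(slice true S) * logb 2 #(slice true S)
          + 2 * min (#(slice false S) : ℝ) #(slice true S) := by
          gcongr
          · exact ih _
          · exact ih _
          · exact_mod_cast hinter
      _ ≤ _ := mul_logb_add_mul_logb_add_two_min_le (Nat.cast_nonneg _) (Nat.cast_nonneg _)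

lemma mul_logb_le_of_le_two_pow {x m : ℕ} (hx : x ≤ 2 ^ m) :
    (x : ℝ) * logb 2 x ≤ x * m := by
  rcases x.eq_zero_or_pos with rfl | hpos
  · simp
  gcongr
  rw [logb_le_iff_le_rpow one_lt_two (by positivity), rpow_natCast]
  exact_mod_cast hx

theorem card_mul_two_pow_le_mul_sum_card {n m : ℕ} {κ : Type*} [Fintype κ]
    (R : κ → Finset (Fin n → Bool)) (hRq : ∀ i, #(R i) ≤ 2 ^ m)
    (hR : ∀ u v, hammingDist u v = 1 → ∃ i, u ∈ R i ∧ v ∈ R i) :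
    (n * 2 ^ n : ℝ) ≤ m * ∑ i, (#(R i) : ℝ) := by
  calc (n * 2 ^ n : ℝ) ≤ ∑ i, (innerEdgeCount (R i) : ℝ) := by
        exact_mod_cast (Fintype.card_fin n ▸ card_mul_two_pow_le_sum_innerEdgeCount R hR)
    _ ≤ ∑ i, (#(R i) : ℝ) * m :=
        sum_le_sum fun i _ => (innerEdgeCount_le _).trans (mul_logb_le_of_le_two_pow (hRq i))
    _ = m * ∑ i, (#(R i) : ℝ) := by rw [mul_sum]; simp only [mul_comm]

section Splitting

variable {κ : Type*} [DecidableEq κ] (grp : ι → κ)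

def maskGroup (g : κ) (u : ι → Bool) : ι → Bool :=
  fun j => if grp j = g then false else u j

def splittingReducer (g : κ) (w : ι → Bool) : Finset (ι → Bool) :=
  {u | maskGroup grp g u = w}

lemma card_splittingReducer_le (g : κ) (w : ι → Bool) :
    #(splittingReducer grp g w) ≤ 2 ^ #{j | grp j = g} := by
  calc #(splittingReducer grp g w) ≤ #(univ : Finset ({j // grp j = g} → Bool)) := by
        refine card_le_card_of_injOn (fun u j => u j) (fun _ _ => mem_coe.2 (mem_univ _)) ?_
        intro u hu v hv huv
        simp only [splittingReducer, coe_filter, mem_univ, true_and, Set.mem_ofPred_eq] at hu hv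
        funext j
        by_cases hj : grp j = g
        · exact congrFun huv ⟨j, hj⟩
        · simpa [maskGroup, hj] using congrFun (hu.trans hv.symm) j
    _ = 2 ^ #{j | grp j = g} := by simp [Fintype.card_subtype]

lemma exists_mem_splittingReducer {u v : ι → Bool} (h : hammingDist u v = 1) :
    ∃ g w, u ∈ splittingReducer grp g w ∧ v ∈ splittingReducer grp g w := by
  obtain ⟨j, rfl⟩ := hammingDist_eq_one_iff.1 h
  refine ⟨grp j, maskGroup grp (grp j) u, by simp [splittingReducer], ?_⟩
  simp only [splittingReducer, mem_filter, mem_univ, true_and]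
  funext i
  by_cases hi : grp i = grp j
  · simp [maskGroup, hi]
  · have : i ≠ j := fun h => hi (h ▸ rfl)
    simp [maskGroup, hi, flipAt, this]

lemma sum_card_splittingReducer (g : κ) :
    ∑ w, #(splittingReducer grp g w) = 2 ^ Fintype.card ι := by
  calc ∑ w, #(splittingReducer grp g w) = #(univ : Finset (ι → Bool)) :=
        (card_eq_sum_card_fiberwise fun _ _ => mem_univ _).symm
    _ = 2 ^ Fintype.card ι := by simp

end Splitting

theorem exists_schema_of_grouping {n m : ℕ} {κ : Type*} [Fintype κ] [DecidableEq κ]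
    (grp : Fin n → κ) (hgrp : ∀ g, #{j | grp j = g} ≤ m) :
    ∃ (p : ℕ) (R : Fin p → Finset (Fin n → Bool)), (∀ i, #(R i) ≤ 2 ^ m) ∧
      (∀ u v, hammingDist u v = 1 → ∃ i, u ∈ R i ∧ v ∈ R i) ∧
      ∑ i, (#(R i) : ℝ) = Fintype.card κ * 2 ^ n := by
  let e := (Fintype.equivFin (κ × (Fin n → Bool))).symm
  refine ⟨_, fun i => splittingReducer grp (e i).1 (e i).2, fun i => ?_, fun u v huv => ?_, ?_⟩
  · exact (card_splittingReducer_le grp _ _).trans (Nat.pow_le_pow_right two_pos (hgrp _))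
  · obtain ⟨g, w, hu, hv⟩ := exists_mem_splittingReducer grp huv
    exact ⟨e.symm (g, w), by simpa using hu, by simpa using hv⟩
  · rw [e.sum_comp (fun x => (#(splittingReducer grp x.1 x.2) : ℝ)), Fintype.sum_prod_type]
    simp only [← Nat.cast_sum, sum_card_splittingReducer, Fintype.card_fin]
    simp

end Hypercube

lemma card_filter_fst_le {ι κ : Type*} [Fintype ι] [DecidableEq κ] {m : ℕ}
    (e : ι ≃ κ × Fin m) (g : κ) : #{j | (e j).1 = g} ≤ m := by
  calc #{j | (e j).1 = g} ≤ #(univ : Finset (Fin m)) :=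
        card_le_card_of_injOn (fun j => (e j).2) (fun _ _ => mem_coe.2 (mem_univ _))
          fun j hj j' hj' h => e.injective (Prod.ext (by simp_all) h)
    _ = m := by simp

open Hypercube

theorem splitting_is_optimal_general (b c q : ℕ) (hb : 1 ≤ b)
    (hdvd : c ∣ b) (hq : q = 2 ^ (b / c)) :
    (∃ (p : ℕ) (R : Fin p → Finset (Fin b → Bool)),
        (∀ i, (R i).card ≤ q) ∧
        (∀ u v : Fin b → Bool, hammingDist u v = 1 → ∃ i, u ∈ R i ∧ v ∈ R i) ∧
        (∑ i, ((R i).card : ℝ)) / 2 ^ b = (c : ℝ)) ∧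
    (∀ (p : ℕ) (R : Fin p → Finset (Fin b → Bool)),
        (∀ i, (R i).card ≤ q) →
        (∀ u v : Fin b → Bool, hammingDist u v = 1 → ∃ i, u ∈ R i ∧ v ∈ R i) →
        (c : ℝ) ≤ (∑ i, ((R i).card : ℝ)) / 2 ^ b) := by
  subst hq
  set m := b / c
  have hbcm : b = c * m := (Nat.mul_div_cancel' hdvd).symm
  have hm : (0 : ℝ) < m := by
    have : m ≠ 0 := by rintro h; rw [h, mul_zero] at hbcm; omega
    positivity
  refine ⟨?_, fun p R hRq hR => ?_⟩
  · let e : Fin b ≃ Fin c × Fin m := (finCongr hbcm).trans finProdFinEquiv.symm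
    obtain ⟨p, R, hRq, hR, hsum⟩ :=
      exists_schema_of_grouping (fun j => (e j).1) (card_filter_fst_le e)
    refine ⟨p, R, hRq, hR, ?_⟩
    rw [hsum, Fintype.card_fin]
    field_simp
  · have hcover := card_mul_two_pow_le_mul_sum_card R hRq hR
    rw [show (b : ℝ) = m * c by exact_mod_cast hbcm.trans (mul_comm _ _), mul_assoc] at hcover
    rw [le_div_iff₀ (by positivity)]
    exact le_of_mul_le_mul_left hcover hm

/-- The lower bound `b/log₂ q` is achieved exactly for the Hamming-distance-1
problem when `c ≥ 2` divides `b ≥ 1` and `q = 2^{b/c}`: there is a valid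
mapping schema (reducers of size at most `q` covering every pair of `b`-bit
strings at Hamming distance 1) with replication rate exactly `c`, and every
valid mapping schema has replication rate at least `c`.  Hence the minimum
replication rate `r(q)` equals `c = b/log₂ q`. -/
theorem splitting_is_optimal (b c q : ℕ) (hb : 1 ≤ b) (hc : 2 ≤ c)
    (hdvd : c ∣ b) (hq : q = 2 ^ (b / c)) :
    (∃ (p : ℕ) (R : Fin p → Finset (Fin b → Bool)),
        (∀ i, (R i).card ≤ q) ∧
        (∀ u v : Fin b → Bool, hammingDist u v = 1 → ∃ i, u ∈ R i ∧ v ∈ R i) ∧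
        (∑ i, ((R i).card : ℝ)) / 2 ^ b = (c : ℝ)) ∧
    (∀ (p : ℕ) (R : Fin p → Finset (Fin b → Bool)),
        (∀ i, (R i).card ≤ q) →
        (∀ u v : Fin b → Bool, hammingDist u v = 1 → ∃ i, u ∈ R i ∧ v ∈ R i) →
        (c : ℝ) ≤ (∑ i, ((R i).card : ℝ)) / 2 ^ b) :=
  splitting_is_optimal_general b c q hb hdvd hq
end
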